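/- Let φ : A⁺ → S be a surjective homomorphism and let u, v ∈ A⁺ with u ≡_φ v for the Karnofsky–Rhodes congruence (same image under φ and same set of transition edges). Then u ≈_φ v for the connected congruence (same image under φ and paths meeting the same strongly connected components). Hence the two-sided connected expansion A⁺/≈_φ is a quotient of the two-sided Karnofsky–Rhodes expansion A⁺/≡_φ. -/

import Mathlib

variable {A S : Type*}

/-- Image of a word under the extension of `φ` to the free monoid, in `S¹ = WithOne S`. -/
def phiStar [Semigroup S] (φ : A → S) (w : List A) : WithOne S :=
  (w.map fun a => (φ a : WithOne S)).prod

/-- `φ` induces a surjective homomorphism `A⁺ → S`. -/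
def PlusSurj [Semigroup S] (φ : A → S) : Prop :=
  ∀ s : S, ∃ w : List A, w ≠ [] ∧ phiStar φ w = (s : WithOne S)

/-- An edge `((s₁,t₁), a, (s₂,t₂))` of the two-sided Cayley graph `Γ_φ`. -/
def IsEdge [Semigroup S] (φ : A → S)
    (e : (WithOne S × WithOne S) × A × (WithOne S × WithOne S)) : Prop :=
  e.1.1 * (φ e.2.1 : WithOne S) = e.2.2.1 ∧ e.1.2 = (φ e.2.1 : WithOne S) * e.2.2.2

/-- There is a path labeled `w` from `p` to `q` in `Γ_φ`. -/
def HasPath [Semigroup S] (φ : A → S) (p q : WithOne S × WithOne S) (w : List A) : Prop :=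
  p.1 * phiStar φ w = q.1 ∧ p.2 = phiStar φ w * q.2

/-- There is a (possibly empty) path from `p` to `q` in `Γ_φ`. -/
def Reach [Semigroup S] (φ : A → S) (p q : WithOne S × WithOne S) : Prop :=
  ∃ w : List A, HasPath φ p q w

/-- `p` and `q` lie in the same strongly connected component of `Γ_φ`. -/
def SameSCC [Semigroup S] (φ : A → S) (p q : WithOne S × WithOne S) : Prop :=
  Reach φ p q ∧ Reach φ q p

/-- `p` is a vertex of the canonical path `p_u` of the word `u` in `Γ_φ`. -/
def OnPath [Semigroup S] (φ : A → S) (u : List A) (p : WithOne S × WithOne S) : Prop :=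
  ∃ u₁ u₂ : List A, u = u₁ ++ u₂ ∧ p = (phiStar φ u₁, phiStar φ u₂)

/-- The paths `p_u` and `p_v` meet the same strongly connected components of `Γ_φ`,
i.e. `C(p_u) = C(p_v)`. -/
def SameComponents [Semigroup S] (φ : A → S) (u v : List A) : Prop :=
  (∀ p, OnPath φ u p → ∃ q, OnPath φ v q ∧ SameSCC φ p q) ∧
  (∀ q, OnPath φ v q → ∃ p, OnPath φ u p ∧ SameSCC φ p q)

/-- The two-sided connected congruence `u ≈_φ v`. -/
def ConnCong [Semigroup S] (φ : A → S) (u v : List A) : Prop :=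
  phiStar φ u = phiStar φ v ∧ SameComponents φ u v

/-- `e` is an edge traversed by the canonical path `p_u` in `Γ_φ`. -/
def EdgeOfPath [Semigroup S] (φ : A → S) (u : List A)
    (e : (WithOne S × WithOne S) × A × (WithOne S × WithOne S)) : Prop :=
  ∃ u₁ u₂ : List A, u = u₁ ++ e.2.1 :: u₂ ∧
    e.1 = (phiStar φ u₁, phiStar φ (e.2.1 :: u₂)) ∧
    e.2.2 = (phiStar φ (u₁ ++ [e.2.1]), phiStar φ u₂)

/-- `e` is a transition edge traversed by `p_u`: an edge of `p_u` whose endpoints lie in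
distinct strongly connected components of `Γ_φ`. -/
def IsTransitionOfPath [Semigroup S] (φ : A → S) (u : List A)
    (e : (WithOne S × WithOne S) × A × (WithOne S × WithOne S)) : Prop :=
  EdgeOfPath φ u e ∧ ¬ SameSCC φ e.1 e.2.2

/-- The two-sided Karnofsky–Rhodes congruence `u ≡_φ v`: same image under `φ` and same set
of transition edges. -/
def KRCong [Semigroup S] (φ : A → S) (u v : List A) : Prop :=
  phiStar φ u = phiStar φ v ∧
  ∀ e, IsTransitionOfPath φ u e ↔ IsTransitionOfPath φ v e

/-!
Every vertex of the path `p_u` either lies in the strongly connected component of its terminal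
vertex `(φ(u), 1)`, or the path leaves its component later through a transition edge whose source
is still in that component. Both the terminal vertex (it is `(φ(v), 1)` when `φ(u) = φ(v)`) and
the transition edges of `p_u` are shared with `p_v` when `u ≡_φ v`, so every component met by
`p_u` is met by `p_v`, and symmetrically.
-/

section

variable [Semigroup S] {φ : A → S}

@[simp]
lemma phiStar_nil : phiStar φ [] = 1 := rfl

@[simp]
lemma phiStar_append (w₁ w₂ : List A) :
    phiStar φ (w₁ ++ w₂) = phiStar φ w₁ * phiStar φ w₂ := by
  simp [phiStar]

lemma Reach.refl (p : WithOne S × WithOne S) : Reach φ p p :=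
  ⟨[], by simp [HasPath]⟩

lemma Reach.trans {p q r : WithOne S × WithOne S} (hpq : Reach φ p q) (hqr : Reach φ q r) :
    Reach φ p r := by
  obtain ⟨w₁, h₁, h₁'⟩ := hpq
  obtain ⟨w₂, h₂, h₂'⟩ := hqr
  exact ⟨w₁ ++ w₂, by rw [phiStar_append, ← mul_assoc, h₁, h₂],
    by rw [phiStar_append, mul_assoc, ← h₂', h₁']⟩

lemma SameSCC.refl (p : WithOne S × WithOne S) : SameSCC φ p p :=
  ⟨.refl p, .refl p⟩

lemma SameSCC.symm {p q : WithOne S × WithOne S} (h : SameSCC φ p q) : SameSCC φ q p :=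
  ⟨h.2, h.1⟩

lemma SameSCC.trans {p q r : WithOne S × WithOne S} (hpq : SameSCC φ p q)
    (hqr : SameSCC φ q r) : SameSCC φ p r :=
  ⟨hpq.1.trans hqr.1, hqr.2.trans hpq.2⟩

/-- Walk along `p_u` from the vertex `(φ(u₁), φ(u₂))`: either the walk never leaves its
component, or the first edge that does is a transition edge starting in that component. -/
lemma sameSCC_terminal_or_transition_source (u₁ u₂ : List A) :
    SameSCC φ (phiStar φ u₁, phiStar φ u₂) (phiStar φ (u₁ ++ u₂), 1) ∨
      ∃ e, IsTransitionOfPath φ (u₁ ++ u₂) e ∧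
        SameSCC φ (phiStar φ u₁, phiStar φ u₂) e.1 := by
  induction u₂ generalizing u₁ with
  | nil => simpa using Or.inl (SameSCC.refl _)
  | cons a u₂ ih =>
    have hsplit : u₁ ++ [a] ++ u₂ = u₁ ++ a :: u₂ := by simp
    by_cases hstay : SameSCC φ (phiStar φ u₁, phiStar φ (a :: u₂))
        (phiStar φ (u₁ ++ [a]), phiStar φ u₂)
    · rw [← hsplit]
      rcases ih (u₁ ++ [a]) with hterm | ⟨e, he, hsrc⟩
      · exact .inl (hstay.trans hterm)
      · exact .inr ⟨e, he, hstay.trans hsrc⟩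
    · exact .inr ⟨((phiStar φ u₁, phiStar φ (a :: u₂)), a,
          (phiStar φ (u₁ ++ [a]), phiStar φ u₂)),
        ⟨⟨u₁, u₂, rfl, rfl, rfl⟩, hstay⟩, .refl _⟩

lemma exists_onPath_sameSCC_of_transitions_subset {u v : List A}
    (hφuv : phiStar φ u = phiStar φ v)
    (htrans : ∀ e, IsTransitionOfPath φ u e → IsTransitionOfPath φ v e)
    {p : WithOne S × WithOne S} (hp : OnPath φ u p) :
    ∃ q, OnPath φ v q ∧ SameSCC φ p q := by
  obtain ⟨u₁, u₂, rfl, rfl⟩ := hp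
  rcases sameSCC_terminal_or_transition_source (φ := φ) u₁ u₂ with hterm | ⟨e, he, hsrc⟩
  · exact ⟨(phiStar φ v, 1), ⟨v, [], by simp, by simp⟩, hφuv ▸ hterm⟩
  · obtain ⟨⟨v₁, v₂, hv, he₁, -⟩, -⟩ := htrans e he
    exact ⟨e.1, ⟨v₁, e.2.1 :: v₂, hv, he₁⟩, hsrc⟩

lemma KRCong.connCong {u v : List A} (h : KRCong φ u v) : ConnCong φ u v := by
  obtain ⟨hφuv, htrans⟩ := h
  refine ⟨hφuv, fun p hp => ?_, fun q hq => ?_⟩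
  · exact exists_onPath_sameSCC_of_transitions_subset hφuv (fun e => (htrans e).mp) hp
  · obtain ⟨p, hp, hqp⟩ :=
      exists_onPath_sameSCC_of_transitions_subset hφuv.symm (fun e => (htrans e).mpr) hq
    exact ⟨p, hp, hqp.symm⟩

end

theorem connCong_of_krCong_general [Semigroup S] (φ : A → S) :
    (∀ u v : List A, u ≠ [] → v ≠ [] → KRCong φ u v → ConnCong φ u v) ∧
    (∃ g : Quot (fun u v : {w : List A // w ≠ []} => KRCong φ u.1 v.1) →
           Quot (fun u v : {w : List A // w ≠ []} => ConnCong φ u.1 v.1),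
      Function.Surjective g ∧
      ∀ u : {w : List A // w ≠ []}, g (Quot.mk _ u) = Quot.mk _ u) :=
  ⟨fun _ _ _ _ h => h.connCong,
    ⟨Quot.map id fun _ _ h => h.connCong,
      Quot.map_surjective (fun _ _ h => h.connCong) Function.surjective_id, fun _ => rfl⟩⟩

/-- `u ≡_φ v` (Karnofsky–Rhodes) implies `u ≈_φ v` (connected); hence the two-sided
connected expansion is a quotient of the two-sided Karnofsky–Rhodes expansion. -/
theorem connCong_of_krCong [Semigroup S] (φ : A → S) (hφ : PlusSurj φ) :
    (∀ u v : List A, u ≠ [] → v ≠ [] → KRCong φ u v → ConnCong φ u v) ∧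
    (∃ g : Quot (fun u v : {w : List A // w ≠ []} => KRCong φ u.1 v.1) →
           Quot (fun u v : {w : List A // w ≠ []} => ConnCong φ u.1 v.1),
      Function.Surjective g ∧
      ∀ u : {w : List A // w ≠ []}, g (Quot.mk _ u) = Quot.mk _ u) :=
  connCong_of_krCong_general φ
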